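/- Let α, β, γ, δ ≥ 0, τ₁, τ₂ ≥ 0, and ε, ζ real, and assume β+γ-ε > 0, with A = β+γ-ε, B = αζ+δA. Assume 2B/(αζ(β+γ)) > τ₁ (with α, ζ, β+γ > 0), and either [B > 0 and (1/ε)(δ(β+γ)A²/B² + 1) > τ₂ with 0 < ε] or [B < 0 and (1/ε)(δ(β+γ)A²/B² + 1) < τ₂ with 0 < ε]. Then no complex number λ = μ + iω with μ ≥ 0 and ω ≠ 0 satisfies the characteristic equation λ² + (β+γ+δ+α y₂* - α y₁* e^{-τ₁λ})λ + (α y₂*+δ)(β+γ-ε e^{-τ₂λ}) = 0, where y₁* = (β+γ)ζ/B and y₂* = ζ/A. -/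
import Mathlib

private lemma aux_sin (τ ω : ℝ) (hτ : 0 ≤ τ) : 0 ≤ ω * Real.sin (τ * ω) + τ * ω ^ 2 := by
  have h1 : |Real.sin (τ * ω)| ≤ |τ * ω| := Real.abs_sin_le_abs
  have h2 : |τ * ω| = τ * |ω| := by rw [abs_mul, abs_of_nonneg hτ]
  have h3 := neg_abs_le (ω * Real.sin (τ * ω))
  have h4 : |ω * Real.sin (τ * ω)| = |ω| * |Real.sin (τ * ω)| := abs_mul _ _
  have h5 : |ω| * |Real.sin (τ * ω)| ≤ |ω| * (τ * |ω|) := by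
    rw [← h2]; exact mul_le_mul_of_nonneg_left h1 (abs_nonneg _)
  have h6 : |ω| * (τ * |ω|) = τ * ω ^ 2 := by
    rw [show |ω| * (τ * |ω|) = τ * (|ω| * |ω|) from by ring, ← abs_mul, ← sq, abs_of_nonneg (sq_nonneg ω)]
  linarith

theorem main_stability (α β γ δ ε ζ τ₁ τ₂ : ℝ)
    (hα : 0 < α) (hβ : 0 ≤ β) (hγ : 0 ≤ γ) (hδ : 0 ≤ δ)
    (hτ₁ : 0 ≤ τ₁) (hτ₂ : 0 ≤ τ₂)
    (hζ : 0 < ζ) (hβγ : 0 < β + γ)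
    (hA : 0 < β + γ - ε)
    (hcond1 : 2 * (α * ζ + δ * (β + γ - ε)) / (α * ζ * (β + γ)) > τ₁)
    (hcond2 :
      (0 < α * ζ + δ * (β + γ - ε) ∧ 0 < ε ∧
        (1 / ε) * (δ * (β + γ) * (β + γ - ε) ^ 2 / (α * ζ + δ * (β + γ - ε)) ^ 2 + 1) > τ₂) ∨
      (α * ζ + δ * (β + γ - ε) < 0 ∧ 0 < ε ∧
        (1 / ε) * (δ * (β + γ) * (β + γ - ε) ^ 2 / (α * ζ + δ * (β + γ - ε)) ^ 2 + 1) < τ₂)) :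
    ¬ ∃ μ ω : ℝ, 0 ≤ μ ∧ ω ≠ 0 ∧
      (let lam : ℂ := ⟨μ, ω⟩
       let y₁ : ℝ := (β + γ) * ζ / (α * ζ + δ * (β + γ - ε))
       let y₂ : ℝ := ζ / (β + γ - ε)
       lam ^ 2 + ((β : ℂ) + γ + δ + α * y₂ - α * y₁ * Complex.exp (-τ₁ * lam)) * lam
         + ((α : ℂ) * y₂ + δ) * ((β : ℂ) + γ - ε * Complex.exp (-τ₂ * lam)) = 0) := by
  rintro ⟨μ, ω, hμ, hω, heq⟩
  simp only at heq
  have hB : 0 < α * ζ + δ * (β + γ - ε) := by nlinarith [mul_pos hα hζ, mul_nonneg hδ hA.le]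
  rcases hcond2 with ⟨-, hε, hτ₂'⟩ | ⟨hBneg, -, -⟩
  swap
  · linarith
  set B : ℝ := α * ζ + δ * (β + γ - ε) with hBdef
  set y₁ : ℝ := (β + γ) * ζ / B with hy₁
  set y₂ : ℝ := ζ / (β + γ - ε) with hy₂
  have hy₁pos : 0 < y₁ := div_pos (mul_pos hβγ hζ) hB
  have hy₂pos : 0 < y₂ := div_pos hζ hA
  have him := congrArg Complex.im heq
  simp only [Complex.add_im, Complex.mul_im, Complex.mul_re, Complex.sub_im, Complex.sub_re,
    Complex.ofReal_re, Complex.ofReal_im, Complex.add_re, Complex.neg_re, Complex.neg_im,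
    Complex.exp_re, Complex.exp_im, Complex.zero_im, pow_two, Real.sin_neg, Real.cos_neg,
    neg_mul, mul_neg, neg_neg, mul_zero, zero_mul, add_zero, zero_add, sub_zero, zero_sub] at him
  set e1 : ℝ := Real.exp (-(τ₁ * μ)) with he1def
  set e2 : ℝ := Real.exp (-(τ₂ * μ)) with he2def
  set s1 : ℝ := Real.sin (τ₁ * ω) with hs1def
  set s2 : ℝ := Real.sin (τ₂ * ω) with hs2def
  set c1 : ℝ := Real.cos (τ₁ * ω) with hc1def
  have he1pos : 0 < e1 := Real.exp_pos _
  have he2pos : 0 < e2 := Real.exp_pos _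
  have he1le : e1 ≤ 1 := Real.exp_le_one_iff.mpr (neg_nonpos.mpr (mul_nonneg hτ₁ hμ))
  have he2le : e2 ≤ 1 := Real.exp_le_one_iff.mpr (neg_nonpos.mpr (mul_nonneg hτ₂ hμ))
  have hc1le : c1 ≤ 1 := Real.cos_le_one _
  have hs1b : 0 ≤ ω * s1 + τ₁ * ω ^ 2 := aux_sin τ₁ ω hτ₁
  have hs2b : 0 ≤ ω * s2 + τ₂ * ω ^ 2 := aux_sin τ₂ ω hτ₂
  have hω2 : 0 < ω ^ 2 := lt_of_le_of_ne (sq_nonneg ω) (Ne.symm (pow_ne_zero 2 hω))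
  -- condition 1 consequence
  have hτ₁B : τ₁ * (α * ζ * (β + γ)) < 2 * B :=
    (lt_div_iff₀ (by positivity)).mp hcond1
  have hK1 : α * y₁ * τ₁ ≤ 2 := by
    rw [hy₁, show α * ((β + γ) * ζ / B) * τ₁ = τ₁ * (α * ζ * (β + γ)) / B from by ring,
      div_le_iff₀ hB]
    linarith
  -- condition 2 consequence
  have hZpos : 0 < (α * y₂ + δ) * ε := by
    have : 0 < α * y₂ + δ := by linarith [mul_pos hα hy₂pos]
    exact mul_pos this hε
  have hετ₂ : ε * τ₂ < δ * (β + γ) * (β + γ - ε) ^ 2 / B ^ 2 + 1 := by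
    have h := mul_lt_mul_of_pos_left hτ₂' hε
    have h2 : ε * (1 / ε * (δ * (β + γ) * (β + γ - ε) ^ 2 / B ^ 2 + 1))
        = δ * (β + γ) * (β + γ - ε) ^ 2 / B ^ 2 + 1 := by
      field_simp
    linarith
  have hident : (α * y₂ + δ) * (δ * (β + γ) * (β + γ - ε) ^ 2 / B ^ 2 + 1)
      = β + γ + δ + α * y₂ - α * y₁ := by
    rw [hy₁, hy₂, hBdef]
    have hA' : (β + γ - ε) ≠ 0 := ne_of_gt hA
    have hB' : (α * ζ + δ * (β + γ - ε)) ≠ 0 := ne_of_gt hB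
    field_simp
    ring
  have hK2 : α * y₁ + (α * y₂ + δ) * ε * τ₂ < β + γ + δ + α * y₂ := by
    have hfrac : 0 < α * y₂ + δ := by linarith [mul_pos hα hy₂pos]
    have h := mul_lt_mul_of_pos_left hετ₂ hfrac
    linarith [h, hident]
  -- assemble
  have h1 : 0 ≤ μ * (α * y₁ * e1) * (ω * s1 + τ₁ * ω ^ 2) :=
    mul_nonneg (mul_nonneg hμ (by positivity)) hs1b
  have h2 : 0 ≤ ω ^ 2 * (α * y₁ * e1) * (1 - c1) :=
    mul_nonneg (mul_nonneg hω2.le (by positivity)) (by linarith)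
  have h3 : 0 ≤ ((α * y₂ + δ) * ε * e2) * (ω * s2 + τ₂ * ω ^ 2) :=
    mul_nonneg (mul_nonneg hZpos.le he2pos.le) hs2b
  have h4 : 0 ≤ ω ^ 2 * (μ * (α * y₁) * τ₁) * (1 - e1) :=
    mul_nonneg (mul_nonneg hω2.le (by positivity)) (by linarith)
  have h5 : 0 ≤ ω ^ 2 * (α * y₁) * (1 - e1) :=
    mul_nonneg (mul_nonneg hω2.le (by positivity)) (by linarith)
  have h6 : 0 ≤ ω ^ 2 * ((α * y₂ + δ) * ε * τ₂) * (1 - e2) :=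
    mul_nonneg (mul_nonneg hω2.le (mul_nonneg hZpos.le hτ₂)) (by linarith)
  have h7 : 0 ≤ ω ^ 2 * μ * (2 - α * y₁ * τ₁) :=
    mul_nonneg (mul_nonneg hω2.le hμ) (by linarith)
  have h8 : 0 < ω ^ 2 * ((β + γ + δ + α * y₂) - α * y₁ - (α * y₂ + δ) * ε * τ₂) :=
    mul_pos hω2 (by linarith)
  have hEω := congrArg (· * ω) him
  simp only [zero_mul] at hEω
  linarith [h1, h2, h3, h4, h5, h6, h7, h8, hEω]
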